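/- Cauchy–Carlitz numbers via Stirling–Carlitz numbers of the first kind: for every n ≥ 1, CC_n = Π(n) Σ_{k=1}^{n} (n+1 choose k+1) · ((−1)^k Π(k)/Π(n + k)) · {n + k brack k}_C. -/

import Mathlib

/-!
Carlitz module: `Fq` is a finite field with `r = Fintype.card Fq` elements (so `r` is a
power of a prime `p`), and `K = Fq(T)` is the field of rational functions over `Fq`.
-/

noncomputable section

variable (Fq : Type*) [Field Fq] [Fintype Fq]

/-- `r`, the number of elements of the finite field `Fq` (a prime power). -/
def rq : ℕ := Fintype.card Fq

/-- `[i] = T^{r^i} − T` in `K = Fq(T)`. -/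
def carlitzBracket (i : ℕ) : RatFunc Fq := RatFunc.X ^ rq Fq ^ i - RatFunc.X

/-- `D_0 = 1`, `D_i = [i]·D_{i−1}^r`. -/
def carlitzD : ℕ → RatFunc Fq
  | 0 => 1
  | i + 1 => carlitzBracket Fq (i + 1) * carlitzD i ^ rq Fq

/-- `L_0 = 1`, `L_i = [i]·L_{i−1}`. -/
def carlitzL : ℕ → RatFunc Fq
  | 0 => 1
  | i + 1 => carlitzBracket Fq (i + 1) * carlitzL i

/-- The Carlitz factorial `Π(i) = ∏_j D_j^{c_j}`, where `i = Σ_j c_j r^j` with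
`0 ≤ c_j < r` is the base-`r` expansion of `i`. -/
def carlitzPi (i : ℕ) : RatFunc Fq :=
  ∏ j ∈ Finset.range (i + 1), carlitzD Fq j ^ (Nat.digits (rq Fq) i).getD j 0

/-- The power series `Σ_{j=0}^∞ (D_N/D_{N+j}) x^{r^{N+j} − r^N}`, i.e.
`(e_C(x) − Σ_{i=0}^{N−1} x^{r^i}/D_i)·D_N/x^{r^N}`; it has constant term `1`. -/
def bcSeries (N : ℕ) : PowerSeries (RatFunc Fq) :=
  PowerSeries.mk fun m => ∑ j ∈ Finset.range (m + 1),
    if m = rq Fq ^ (N + j) - rq Fq ^ N then carlitzD Fq N / carlitzD Fq (N + j) else 0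

/-- The truncated Bernoulli–Carlitz number `BC_{N,n}`: `BC_{N,n}/Π(n)` is the `n`-th
coefficient of the multiplicative inverse of the power series
`Σ_{j=0}^∞ (D_N/D_{N+j}) x^{r^{N+j} − r^N}`. -/
def truncBC (N n : ℕ) : RatFunc Fq :=
  carlitzPi Fq n * PowerSeries.coeff n (bcSeries Fq N)⁻¹

/-- The power series `Σ_{j=0}^∞ (−1)^j (L_N/L_{N+j}) x^{r^{N+j} − r^N}`, i.e.
`(log_C(x) − Σ_{i=0}^{N−1} (−1)^i x^{r^i}/L_i)·(−1)^N L_N/x^{r^N}`;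
it has constant term `1`. -/
def ccSeries (N : ℕ) : PowerSeries (RatFunc Fq) :=
  PowerSeries.mk fun m => ∑ j ∈ Finset.range (m + 1),
    if m = rq Fq ^ (N + j) - rq Fq ^ N then
      (-1) ^ j * carlitzL Fq N / carlitzL Fq (N + j) else 0

/-- The truncated Cauchy–Carlitz number `CC_{N,n}`: `CC_{N,n}/Π(n)` is the `n`-th
coefficient of the multiplicative inverse of the power series
`Σ_{j=0}^∞ (−1)^j (L_N/L_{N+j}) x^{r^{N+j} − r^N}`. -/
def truncCC (N n : ℕ) : RatFunc Fq :=
  carlitzPi Fq n * PowerSeries.coeff n (ccSeries Fq N)⁻¹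

/-- The tail `e_C(z) − 𝓔_{N−1}(z) = Σ_{i=N}^∞ z^{r^i}/D_i` of the Carlitz exponential. -/
def carlitzExpTail (N : ℕ) : PowerSeries (RatFunc Fq) :=
  PowerSeries.mk fun m => ∑ j ∈ Finset.range (m + 1),
    if m = rq Fq ^ (N + j) then (carlitzD Fq (N + j))⁻¹ else 0

/-- The associated Stirling–Carlitz number of the second kind `{n brace k}_{C,≥N}`,
defined by `(e_C(z) − 𝓔_{N−1}(z))^k/Π(k) = Σ_n {n brace k}_{C,≥N} z^n/Π(n)`. -/
def stirling2C (N k n : ℕ) : RatFunc Fq :=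
  carlitzPi Fq n / carlitzPi Fq k * PowerSeries.coeff n (carlitzExpTail Fq N ^ k)

/-- The tail `log_C(z) − 𝓕_{N−1}(z) = Σ_{i=N}^∞ (−1)^i z^{r^i}/L_i` of the Carlitz
logarithm. -/
def carlitzLogTail (N : ℕ) : PowerSeries (RatFunc Fq) :=
  PowerSeries.mk fun m => ∑ j ∈ Finset.range (m + 1),
    if m = rq Fq ^ (N + j) then (-1) ^ (N + j) * (carlitzL Fq (N + j))⁻¹ else 0

/-- The associated Stirling–Carlitz number of the first kind `{n brack k}_{C,≥N}`,
defined by `(log_C(z) − 𝓕_{N−1}(z))^k/Π(k) = Σ_n {n brack k}_{C,≥N} z^n/Π(n)`. -/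
def stirling1C (N k n : ℕ) : RatFunc Fq :=
  carlitzPi Fq n / carlitzPi Fq k * PowerSeries.coeff n (carlitzLogTail Fq N ^ k)

open PowerSeries in
private lemma key_inv_coeff {K : Type*} [Field K] (f : PowerSeries K)
    (hf : constantCoeff f = 1) (n : ℕ) (hn : 1 ≤ n) :
    coeff n f⁻¹ =
      ∑ k ∈ Finset.Icc 1 n, ((n+1).choose (k+1) : K) * (-1)^k * coeff n (f^k) := by
  have hf0 : constantCoeff f ≠ 0 := by rw [hf]; exact one_ne_zero
  have hmul : f * f⁻¹ = 1 := PowerSeries.mul_inv_cancel f hf0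
  set S : PowerSeries K :=
    ∑ k ∈ Finset.range (n+1), C (((n+1).choose (k+1) : K) * (-1)^k) * f^k with hS
  have h1 : f * S = 1 - (1 - f)^(n+1) := by
    have hb : (1 - f)^(n+1)
        = ∑ j ∈ Finset.range (n+2), (-f)^j * 1^(n+1-j) * ((n+1).choose j : PowerSeries K) := by
      rw [show (1 - f) = (-f) + 1 by ring, add_pow]
    rw [hb, Finset.sum_range_succ']
    rw [hS, Finset.mul_sum]
    simp only [pow_zero, one_mul, one_pow, mul_one, Nat.choose_zero_right, Nat.cast_one]
    rw [sub_add_eq_sub_sub, sub_sub_cancel_left, ← Finset.sum_neg_distrib]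
    refine Finset.sum_congr rfl fun k _ => ?_
    have : C (((n+1).choose (k+1) : K) * (-1)^k)
        = ((n+1).choose (k+1) : PowerSeries K) * (-1)^k := by
      simp [map_mul, map_pow, map_natCast]
    rw [this]
    ring
  have h2 : S = f⁻¹ - f⁻¹ * (1 - f)^(n+1) := by
    have : S = f⁻¹ * (f * S) := by rw [← mul_assoc, mul_comm f⁻¹ f, hmul, one_mul]
    rw [this, h1, mul_sub, mul_one]
  have h3 : coeff n (f⁻¹ * (1 - f)^(n+1)) = 0 := by
    obtain ⟨v, hv⟩ : (X : PowerSeries K)^(n+1) ∣ (1 - f)^(n+1) :=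
      pow_dvd_pow_of_dvd (X_dvd_iff.2 (by simp [hf])) _
    rw [hv, show f⁻¹ * (X^(n+1) * v) = (f⁻¹ * v) * X^(n+1) by ring,
      coeff_mul_X_pow']
    simp
  have h4 : coeff n S = coeff n f⁻¹ := by
    rw [h2, map_sub, h3, sub_zero]
  rw [← h4, hS, map_sum]
  simp only [coeff_C_mul]
  rw [Finset.sum_range_succ']
  have h0 : ((n+1).choose (0+1) : K) * (-1)^0 * coeff n (f^0) = 0 := by
    simp only [pow_zero, PowerSeries.coeff_one, if_neg (by omega : ¬ n = 0), mul_zero]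
  rw [h0, add_zero]
  rw [show Finset.Icc 1 n = Finset.Ico 1 (n+1) by rw [Finset.Ico_add_one_right_eq_Icc],
    Finset.sum_Ico_eq_sum_range]
  simp only [Nat.add_sub_cancel]
  exact (Finset.sum_congr rfl fun k _ => by rw [add_comm 1 k, mul_assoc]).symm

private lemma two_le_rq : 2 ≤ rq Fq := Fintype.one_lt_card

private lemma carlitzBracket_ne_zero (i : ℕ) (hi : 1 ≤ i) : carlitzBracket Fq i ≠ 0 := by
  have h2 : 2 ≤ rq Fq ^ i := le_trans (two_le_rq Fq) (Nat.le_self_pow (by omega) _)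
  have heq : carlitzBracket Fq i
      = algebraMap (Polynomial Fq) (RatFunc Fq) (Polynomial.X ^ rq Fq ^ i - Polynomial.X) := by
    simp [carlitzBracket, map_sub, map_pow, RatFunc.algebraMap_X]
  rw [heq]
  intro h
  have h0 : (Polynomial.X ^ rq Fq ^ i - Polynomial.X : Polynomial Fq) = 0 := by
    have := RatFunc.algebraMap_injective Fq (h.trans (map_zero _).symm)
    exact this
  have hc := congrArg (fun p => Polynomial.coeff p (rq Fq ^ i)) h0
  simp only [Polynomial.coeff_sub, Polynomial.coeff_X_pow, Polynomial.coeff_X, if_pos rfl,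
    if_neg (by omega : ¬ (1 : ℕ) = rq Fq ^ i), Polynomial.coeff_zero, sub_zero] at hc
  exact one_ne_zero hc

private lemma carlitzD_ne_zero (i : ℕ) : carlitzD Fq i ≠ 0 := by
  induction i with
  | zero => simp [carlitzD]
  | succ i ih =>
    exact mul_ne_zero (carlitzBracket_ne_zero Fq (i+1) (by omega)) (pow_ne_zero _ ih)

private lemma carlitzPi_ne_zero (i : ℕ) : carlitzPi Fq i ≠ 0 :=
  Finset.prod_ne_zero_iff.2 fun j _ => pow_ne_zero _ (carlitzD_ne_zero Fq j)

private lemma constCoeff_ccSeries :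
    PowerSeries.constantCoeff (ccSeries Fq 0) = 1 := by
  rw [← PowerSeries.coeff_zero_eq_constantCoeff]
  simp [ccSeries, carlitzL, PowerSeries.coeff_mk]

private lemma logTail_eq_X_mul :
    carlitzLogTail Fq 0 = PowerSeries.X * ccSeries Fq 0 := by
  ext m
  rcases m with _ | m
  · simp only [PowerSeries.coeff_zero_eq_constantCoeff, map_mul, PowerSeries.constantCoeff_X,
      zero_mul]
    rw [← PowerSeries.coeff_zero_eq_constantCoeff]
    simp [carlitzLogTail]
  · rw [PowerSeries.coeff_succ_X_mul]
    simp only [carlitzLogTail, ccSeries, PowerSeries.coeff_mk]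
    rw [Finset.sum_range_succ]
    have hr : 2 ≤ rq Fq := two_le_rq Fq
    have hlast : m + 1 ≠ rq Fq ^ (0 + (m+1)) := by
      have h := Nat.lt_pow_self (n := m+1) (show 1 < rq Fq by omega)
      rw [zero_add]
      omega
    rw [if_neg hlast, add_zero]
    refine Finset.sum_congr rfl fun j hj => ?_
    have hpos : 1 ≤ rq Fq ^ (0 + j) := Nat.one_le_pow _ _ (by omega)
    have hiff : (m + 1 = rq Fq ^ (0 + j)) ↔ (m = rq Fq ^ (0 + j) - rq Fq ^ 0) := by
      simp only [pow_zero]; omega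
    by_cases h : m + 1 = rq Fq ^ (0 + j)
    · rw [if_pos h, if_pos (hiff.1 h)]
      simp [carlitzL, div_eq_mul_inv]
    · rw [if_neg h, if_neg (fun hc => h (hiff.2 hc))]

/-- Cauchy–Carlitz numbers (`CC_n = CC_{0,n}`) via Stirling–Carlitz
numbers of the first kind (`{n brack k}_C = {n brack k}_{C,≥0}`). -/
theorem cauchyCarlitz_eq_sum_stirling1C (n : ℕ) (hn : 1 ≤ n) :
    truncCC Fq 0 n =
      carlitzPi Fq n * ∑ k ∈ Finset.Icc 1 n,
        ((n + 1).choose (k + 1) : RatFunc Fq) *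
          ((-1) ^ k * carlitzPi Fq k / carlitzPi Fq (n + k)) *
          stirling1C Fq 0 k (n + k) := by
  rw [truncCC, key_inv_coeff (ccSeries Fq 0) (constCoeff_ccSeries Fq) n hn]
  congr 1
  refine Finset.sum_congr rfl fun k hk => ?_
  rw [stirling1C, logTail_eq_X_mul, mul_pow,
    mul_comm ((PowerSeries.X : PowerSeries (RatFunc Fq)) ^ k) ((ccSeries Fq 0) ^ k),
    PowerSeries.coeff_mul_X_pow', if_pos (Nat.le_add_left k n), Nat.add_sub_cancel]
  have h1 : carlitzPi Fq k ≠ 0 := carlitzPi_ne_zero Fq k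
  have h2 : carlitzPi Fq (n + k) ≠ 0 := carlitzPi_ne_zero Fq (n + k)
  field_simp


end
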